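/- Suppose for all k in {m,…,M}, S(k) ≤ T(k) + N·(2^k + η), where S(k), T(k) ≥ 0, N ≥ 1, η ≥ 0, and suppose n* ≥ Σ_{k=m}^{M} T(k)/2^{k+1} and n ≤ Σ_{k=m}^{M} S(k)/2^{k-1}. Then n ≤ 4·n* + N·(4·(M−m+1) + 4η/2^m). -/

import Mathlib

/-!
Dividing the workload bound `S k ≤ T k + N (2^k + η)` by `2^(k-1)` bounds the `k`-th term of the
estimate for `n` by `4 T k / 2^(k+1) + 2N + 2Nη / 2^k`. Summing over `k ∈ [m, M]`, the first terms
give `4 n*`, the constant terms `2N (M - m + 1)`, and the geometric series `∑ 2^(-k) ≤ 2 / 2^m`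
gives the `η`-term.
-/

open Finset

lemma sum_Icc_inv_two_zpow_le (m M : ℤ) :
    ∑ k ∈ Icc m M, ((2 : ℝ) ^ k)⁻¹ ≤ 2 / 2 ^ m := by
  rw [Int.Icc_eq_finset_map, sum_map]
  simp only [Function.Embedding.trans_apply, Nat.castEmbedding_apply, addLeftEmbedding_apply]
  calc ∑ i ∈ range (M + 1 - m).toNat, ((2 : ℝ) ^ (m + i))⁻¹
      = (2 ^ m)⁻¹ * ∑ i ∈ range (M + 1 - m).toNat, (1 / 2 : ℝ) ^ i := by
        rw [mul_sum]
        refine sum_congr rfl fun i _ => ?_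
        rw [zpow_add₀ two_ne_zero, zpow_natCast, mul_inv, one_div, inv_pow]
    _ ≤ (2 ^ m)⁻¹ * 2 := by gcongr; exact sum_geometric_two_le _
    _ = 2 / 2 ^ m := by ring

lemma div_two_zpow_sub_one_le {a b c : ℝ} (k : ℤ) (h : a ≤ b + c) :
    a / 2 ^ (k - 1) ≤ 4 * (b / 2 ^ (k + 1)) + 2 * (c / 2 ^ k) := by
  have hk : (0 : ℝ) < 2 ^ k := by positivity
  rw [zpow_sub_one₀ two_ne_zero, zpow_add_one₀ two_ne_zero]
  field_simp
  linarith

theorem stmt_7_general (m M : ℤ) (hmM : m ≤ M) (S T : ℤ → ℝ) (N η n nstar : ℝ)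
    (hN : 1 ≤ N) (hη : 0 ≤ η)
    (hwork : ∀ k ∈ Finset.Icc m M, S k ≤ T k + N * ((2:ℝ)^k + η))
    (hnstar : (∑ k ∈ Finset.Icc m M, T k / (2:ℝ)^(k+1)) ≤ nstar)
    (hn : n ≤ ∑ k ∈ Finset.Icc m M, S k / (2:ℝ)^(k-1)) :
    n ≤ 4 * nstar + N * (4 * ((M : ℝ) - (m : ℝ) + 1) + 4 * η / (2:ℝ)^m) := by
  have hcard : (#(Icc m M) : ℝ) = M - m + 1 := by
    have h := Int.card_Icc_of_le m M (by omega)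
    rw [← Int.cast_natCast, h]
    push_cast
    ring
  have hterm : ∀ k ∈ Icc m M, S k / 2 ^ (k - 1) ≤
      4 * (T k / 2 ^ (k + 1)) + 2 * (N + N * η * ((2 : ℝ) ^ k)⁻¹) := fun k hk => by
    have h2k : (2 : ℝ) ^ k ≠ 0 := by positivity
    convert div_two_zpow_sub_one_le k (hwork k hk) using 3
    field_simp
  have hlen : (0 : ℝ) ≤ M - m + 1 := by
    have : (m : ℝ) ≤ M := by exact_mod_cast hmM
    linarith
  calc n ≤ ∑ k ∈ Icc m M, (4 * (T k / 2 ^ (k + 1)) + 2 * (N + N * η * ((2 : ℝ) ^ k)⁻¹)) :=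
        hn.trans (sum_le_sum hterm)
    _ = 4 * ∑ k ∈ Icc m M, T k / 2 ^ (k + 1) + 2 * N * #(Icc m M)
          + 2 * N * η * ∑ k ∈ Icc m M, ((2 : ℝ) ^ k)⁻¹ := by
        simp only [sum_add_distrib, ← mul_sum, sum_const, nsmul_eq_mul]
        ring
    _ ≤ 4 * nstar + 2 * N * (M - m + 1) + 2 * N * η * (2 / 2 ^ m) := by
        rw [hcard]
        gcongr
        exact sum_Icc_inv_two_zpow_le m M
    _ ≤ 4 * nstar + N * (4 * ((M : ℝ) - (m : ℝ) + 1) + 4 * η / (2:ℝ)^m) := by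
        have : 2 * N * (M - m + 1) ≤ 4 * N * (M - m + 1) := by gcongr; norm_num
        linarith [show 2 * N * η * (2 / 2 ^ m) = N * (4 * η / (2 : ℝ) ^ m) by ring]

/-- abstract competitive-ratio counting argument:
from `S(k) ≤ T(k) + N(2^k + η)`, `n* ≥ Σ T(k)/2^{k+1}` and `n ≤ Σ S(k)/2^{k-1}`,
conclude `n ≤ 4 n* + N (4(M-m+1) + 4η/2^m)`. -/
theorem stmt_7 (m M : ℤ) (hmM : m ≤ M) (S T : ℤ → ℝ) (N η n nstar : ℝ)
    (hS : ∀ k, 0 ≤ S k) (hT : ∀ k, 0 ≤ T k) (hN : 1 ≤ N) (hη : 0 ≤ η)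
    (hwork : ∀ k ∈ Finset.Icc m M, S k ≤ T k + N * ((2:ℝ)^k + η))
    (hnstar : (∑ k ∈ Finset.Icc m M, T k / (2:ℝ)^(k+1)) ≤ nstar)
    (hn : n ≤ ∑ k ∈ Finset.Icc m M, S k / (2:ℝ)^(k-1)) :
    n ≤ 4 * nstar + N * (4 * ((M : ℝ) - (m : ℝ) + 1) + 4 * η / (2:ℝ)^m) :=
  stmt_7_general m M hmM S T N η n nstar hN hη hwork hnstar hn
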